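/- Let P be a full-dimensional pyramid in the pyramid decomposition process, i.e., P = cone(key) with key = {x_i} ∪ ({x_1,...,x_{i−1}} ∩ H) for some H ∈ ℋ^<(C_{i−1}, x_i), and let G be a support hyperplane of P. Then G is a support hyperplane of C_i = cone(x_1,...,x_i) that is not a support hyperplane of C_{i−1} = cone(x_1,...,x_{i−1}) if and only if: (i) x_j ∈ G^+ for all j = 1,...,i−1, and (ii) x_j ∈ G^> for all j = 1,...,i−1 with x_j ∉ P. -/

import Mathlib

open Finset

/-- Ambient space `ℝ^d`. -/
abbrev E (d : ℕ) := Fin d → ℝ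

/-- The cone generated by a set of vectors:
all finite nonnegative combinations. -/
def coneOf {d : ℕ} (s : Set (E d)) : Set (E d) :=
  {y | ∃ (t : Finset (E d)) (c : E d → ℝ),
        ↑t ⊆ s ∧ (∀ v, 0 ≤ c v) ∧ y = ∑ v ∈ t, c v • v}

/-- The cone generated by a finite family `x_1, …, x_n`:
`ℝ₊x_1 + ⋯ + ℝ₊x_n`. -/
def coneFin {d n : ℕ} (x : Fin n → E d) : Set (E d) :=
  {y | ∃ c : Fin n → ℝ, (∀ i, 0 ≤ c i) ∧ y = ∑ i, c i • x i}

/-- `σ` is visible from `x` (relative to the cone `D`) if `x ∉ D` and for every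
`y ∈ σ` the segment `[x,y]` meets `D` only in `y`. -/
def VisibleFrom {d : ℕ} (D : Set (E d)) (x : E d) (σ : Set (E d)) : Prop :=
  x ∉ D ∧ ∀ y ∈ σ, ∀ z ∈ segment ℝ x y, z ∈ D → z = y

/-- `cone(σ, x)` for a cone `σ`: all points `y + t•x`, `y ∈ σ`, `t ≥ 0`. -/
def addRay {d : ℕ} (σ : Set (E d)) (x : E d) : Set (E d) :=
  {z | ∃ y ∈ σ, ∃ t : ℝ, 0 ≤ t ∧ z = y + t • x}

/-- The lexicographic (placing) triangulation `Λ(x_1,…,x_n)`, defined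
recursively: trivial for the zero cone, and at each step the cones over the
members of the previous triangulation visible from the new generator are
added. -/
def lexTri {d : ℕ} : (n : ℕ) → (Fin n → E d) → Set (Set (E d))
  | 0, _ => {{0}}
  | n + 1, x =>
      lexTri n (fun i => x i.castSucc) ∪
      {τ | ∃ σ ∈ lexTri n (fun i => x i.castSucc),
            VisibleFrom (coneFin (fun i => x i.castSucc)) (x (Fin.last n)) σ ∧
            τ = addRay σ (x (Fin.last n))}

/-- The dimension of a subset of `ℝ^d`: the dimension of its linear span. -/
noncomputable def setDim {d : ℕ} (s : Set (E d)) : ℕ :=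
  Module.finrank ℝ (Submodule.span ℝ s)

/-- Restriction `Σ|C' = {σ ∩ C' : σ ∈ Σ, dim (σ ∩ C') = dim C'}`. -/
noncomputable def restrictTri {d : ℕ} (T : Set (Set (E d))) (s : Set (E d)) :
    Set (Set (E d)) :=
  {τ | ∃ σ ∈ T, τ = σ ∩ s ∧ setDim (σ ∩ s) = setDim s}

/-- `F` is a face of the cone `C`: either `C` itself or the intersection of
`C` with a supporting hyperplane. -/
def IsFace {d : ℕ} (C F : Set (E d)) : Prop :=
  F = C ∨ ∃ μ : (E d) →ₗ[ℝ] ℝ, (∀ y ∈ C, 0 ≤ μ y) ∧ F = C ∩ {y | μ y = 0}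

/-- A cone is pointed if it contains no nonzero linear subspace. -/
def IsPointedCone {d : ℕ} (C : Set (E d)) : Prop :=
  ∀ y, y ∈ C → -y ∈ C → y = 0

/-- `T` is a triangulation of `C` with rays through a subset of `gens`:
every member is a simplicial cone spanned by a linearly independent subset of
`gens`, the members cover `C`, and any two members intersect in a common
face. -/
def IsTriangulationOn {d : ℕ} (gens : Set (E d)) (C : Set (E d))
    (T : Set (Set (E d))) : Prop :=
  (∀ σ ∈ T, ∃ s : Finset (E d), ↑s ⊆ gens ∧
      LinearIndependent ℝ (fun v : s => (v : E d)) ∧ σ = coneOf (↑s : Set (E d))) ∧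
  ⋃₀ T = C ∧
  (∀ σ ∈ T, ∀ τ ∈ T, IsFace σ (σ ∩ τ) ∧ IsFace τ (σ ∩ τ))

/-- The linear form `μ` defines a support hyperplane (in the irredundant
representation) of the full-dimensional cone `D`, oriented with `D ⊆ {μ ≥ 0}`:
`μ` is nonnegative on `D` and cuts out a facet of `D`. -/
noncomputable def IsSuppForm {d : ℕ} (D : Set (E d)) (μ : (E d) →ₗ[ℝ] ℝ) : Prop :=
  (∀ y ∈ D, 0 ≤ μ y) ∧ setDim (D ∩ {y | μ y = 0}) = setDim D - 1


/-!
Write `H = {ν = 0}`, `G = {μ = 0}`, `s` for the generators of `C_{i-1}`, `F = C_{i-1} ∩ G` and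
`P = cone(x_i, s ∩ H)`.
Since `H ∩ C_{i-1}` is a facet of the full-dimensional cone `C_{i-1}` and `x_i ∉ H`, the
pyramid `P` is full-dimensional, so a facet of `P` that is valid on `C_i` is a facet of `C_i`.
Both directions of the criterion turn on the inclusion `F ⊆ H`.

If `G` is new, `F` has dimension at most `d - 2`, while `P ∩ G` (of dimension `d - 1`) lies in
`cone(x_i, F ∩ H)`; hence `F ∩ H` spans the same space as `F`, and `F ⊆ H`. Every `x_j ∈ G`
then lies in `s ∩ H ⊆ P`, which is (ii).

Conversely, under (ii) the generators of `C_{i-1}` on `G` lie in `P ⊆ H^-`, so `F ⊆ H`. If `F`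
were a facet of `C_{i-1}`, it would span `H`, so `H ⊆ G`; together with `ν(x_i) < 0 ≤ μ(x_i)` this
forces `μ` to vanish on `C_{i-1}`, contradicting full-dimensionality.
-/

open Submodule LinearMap

section

variable {d : ℕ}

lemma subset_coneOf (s : Set (E d)) : s ⊆ coneOf s := by
  classical
  intro v hv
  exact ⟨{v}, fun w => if w = v then 1 else 0, by simpa using hv,
    fun _ => ite_nonneg zero_le_one le_rfl, by simp⟩

lemma coneOf_mono {s t : Set (E d)} (h : s ⊆ t) : coneOf s ⊆ coneOf t := by
  rintro y ⟨u, c, hus, hc, rfl⟩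
  exact ⟨u, c, hus.trans h, hc, rfl⟩

lemma coneOf_subset_span (s : Set (E d)) : coneOf s ⊆ span ℝ s := by
  rintro y ⟨t, c, hts, -, rfl⟩
  exact sum_mem fun v hv => smul_mem _ _ (subset_span (hts hv))

lemma span_coneOf (s : Set (E d)) : span ℝ (coneOf s) = span ℝ s :=
  le_antisymm (span_le.mpr (coneOf_subset_span s)) (span_mono (subset_coneOf s))

lemma setDim_coneOf (s : Set (E d)) : setDim (coneOf s) = setDim s := by
  rw [setDim, setDim, span_coneOf]

lemma nonneg_of_mem_coneOf {s : Set (E d)} {μ : E d →ₗ[ℝ] ℝ} (h : ∀ v ∈ s, 0 ≤ μ v)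
    {y : E d} (hy : y ∈ coneOf s) : 0 ≤ μ y := by
  obtain ⟨t, c, hts, hc, rfl⟩ := hy
  simp only [map_sum, map_smul, smul_eq_mul]
  exact Finset.sum_nonneg fun v hv => mul_nonneg (hc v) (h v (hts hv))

lemma span_le_ker {s : Set (E d)} {μ : E d →ₗ[ℝ] ℝ} (h : s ⊆ {y | μ y = 0}) :
    span ℝ s ≤ ker μ :=
  span_le.mpr h

lemma coneOf_inter_ker {s : Set (E d)} {μ : E d →ₗ[ℝ] ℝ} (h : ∀ v ∈ s, 0 ≤ μ v) :
    coneOf s ∩ {y | μ y = 0} = coneOf (s ∩ {y | μ y = 0}) := by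
  classical
  refine subset_antisymm ?_ fun y hy =>
    ⟨coneOf_mono Set.inter_subset_left hy,
      span_le_ker (fun _ hv => hv.2) (coneOf_subset_span _ hy)⟩
  rintro _ ⟨⟨t, c, hts, hc, rfl⟩, hy0⟩
  have hzero : ∀ v ∈ t, c v * μ v = 0 := by
    refine (Finset.sum_eq_zero_iff_of_nonneg fun v hv => mul_nonneg (hc v) (h v (hts hv))).mp ?_
    simpa only [Set.mem_ofPred_eq, map_sum, map_smul, smul_eq_mul] using hy0
  refine ⟨t.filter (fun v => μ v = 0), c, ?_, hc, ?_⟩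
  · intro v hv
    simp only [Finset.coe_filter, Set.mem_ofPred_eq] at hv
    exact ⟨hts hv.1, hv.2⟩
  · refine (Finset.sum_filter_of_ne fun v hv hne => ?_).symm
    have hcv : c v ≠ 0 := fun h0 => hne (by rw [h0, zero_smul])
    exact (mul_eq_zero.mp (hzero v hv)).resolve_left hcv

lemma setDim_mono {s t : Set (E d)} (h : s ⊆ t) : setDim s ≤ setDim t :=
  finrank_mono (span_mono h)

lemma setDim_singleton_union_le (x : E d) (s : Set (E d)) :
    setDim ({x} ∪ s) ≤ setDim s + 1 := by
  rw [setDim, span_union, add_comm]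
  exact (finrank_add_le_finrank_add_finrank _ _).trans
    (Nat.add_le_add_right ((finrank_span_le_card {x}).trans (by simp)) _)

lemma setDim_add_one_le_of_subset_ker {s : Set (E d)} {μ : E d →ₗ[ℝ] ℝ} (hμ : μ ≠ 0)
    (h : s ⊆ {y | μ y = 0}) : setDim s + 1 ≤ d := by
  have hker := Module.Dual.finrank_ker_add_one_of_ne_zero hμ
  have hle := finrank_mono (span_le_ker h)
  rw [Module.finrank_fin_fun] at hker
  rw [setDim]
  omega

lemma span_eq_ker_of_le_setDim {s : Set (E d)} {ν : E d →ₗ[ℝ] ℝ} (hν : ν ≠ 0)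
    (h : s ⊆ {y | ν y = 0}) (hd : d ≤ setDim s + 1) : span ℝ s = ker ν := by
  refine eq_of_le_of_finrank_le (span_le_ker h) ?_
  have hker := Module.Dual.finrank_ker_add_one_of_ne_zero hν
  rw [Module.finrank_fin_fun] at hker
  change d ≤ Module.finrank ℝ (span ℝ s) + 1 at hd
  omega

lemma subset_ker_of_setDim_le {S F : Set (E d)} {ν : E d →ₗ[ℝ] ℝ} (hSF : S ⊆ F)
    (hS : S ⊆ {y | ν y = 0}) (hdim : setDim F ≤ setDim S) : F ⊆ {y | ν y = 0} := by
  have hspan : span ℝ S = span ℝ F := eq_of_le_of_finrank_le (span_mono hSF) hdim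
  intro y hy
  exact span_le_ker hS (hspan ▸ subset_span hy)

lemma IsSuppForm.span_inter_ker {D : Set (E d)} {ν : E d →ₗ[ℝ] ℝ} (hD : setDim D = d)
    (hν0 : ν ≠ 0) (hν : IsSuppForm D ν) : span ℝ (D ∩ {y | ν y = 0}) = ker ν :=
  span_eq_ker_of_le_setDim hν0 (fun _ hy => hy.2) (by rw [hν.2, hD]; omega)

lemma IsSuppForm.of_subset {P C : Set (E d)} {μ : E d →ₗ[ℝ] ℝ} (hμ0 : μ ≠ 0)
    (hP : setDim P = d) (hC : setDim C = d) (hPC : P ⊆ C) (hμC : ∀ y ∈ C, 0 ≤ μ y)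
    (hμ : IsSuppForm P μ) : IsSuppForm C μ := by
  refine ⟨hμC, ?_⟩
  have hub := setDim_add_one_le_of_subset_ker hμ0 (s := C ∩ {y | μ y = 0}) fun _ hy => hy.2
  have hlb := setDim_mono (Set.inter_subset_inter_left {y | μ y = 0} hPC)
  rw [hμ.2, hP] at hlb
  omega

lemma LinearMap.apply_eq_zero_of_ker_le {V : Type*} [AddCommGroup V] [Module ℝ V]
    {μ ν : V →ₗ[ℝ] ℝ} (h : ker ν ≤ ker μ) {x y : V} (hνx : ν x < 0) (hμx : 0 ≤ μ x)
    (hνy : 0 ≤ ν y) (hμy : 0 ≤ μ y) : μ y = 0 := by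
  have hz : ν y • x - ν x • y ∈ ker ν := by simp [mul_comm]
  have hμz : ν y * μ x - ν x * μ y = 0 := by simpa using h hz
  nlinarith [mul_nonneg hνy hμx]

lemma not_isSuppForm_of_inter_ker_subset {D : Set (E d)} {x : E d} {μ ν : E d →ₗ[ℝ] ℝ}
    (hD : setDim D = d) (hν0 : ν ≠ 0) (hνD : ∀ y ∈ D, 0 ≤ ν y) (hνx : ν x < 0)
    (hμx : 0 ≤ μ x) (hF : D ∩ {y | μ y = 0} ⊆ {y | ν y = 0}) : ¬ IsSuppForm D μ := by
  rintro ⟨hμD, hdim⟩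
  have hker : ker ν ≤ ker μ := by
    rw [← span_eq_ker_of_le_setDim hν0 hF (by rw [hdim, hD]; omega)]
    exact span_le_ker fun _ hy => hy.2
  have hDF : D ⊆ D ∩ {y | μ y = 0} := fun y hy =>
    ⟨hy, apply_eq_zero_of_ker_le hker hνx hμx (hνD y hy) (hμD y hy)⟩
  have := setDim_add_one_le_of_subset_ker hν0 (hDF.trans hF)
  omega

section Pyramid

def pyramid (s : Set (E d)) (x : E d) (ν : E d →ₗ[ℝ] ℝ) : Set (E d) :=
  coneOf ({x} ∪ (s ∩ {y | ν y = 0}))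

variable {s : Set (E d)} {x : E d} {μ ν : E d →ₗ[ℝ] ℝ}

lemma mem_pyramid_apex : x ∈ pyramid s x ν :=
  subset_coneOf _ (Or.inl rfl)

lemma mem_pyramid_of_mem_ker {v : E d} (hv : v ∈ s) (hνv : ν v = 0) : v ∈ pyramid s x ν :=
  subset_coneOf _ (Or.inr ⟨hv, hνv⟩)

lemma nonpos_of_mem_pyramid (hνx : ν x ≤ 0) {y : E d} (hy : y ∈ pyramid s x ν) : ν y ≤ 0 := by
  have hneg : ∀ v ∈ {x} ∪ (s ∩ {y | ν y = 0}), 0 ≤ (-ν) v := by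
    rintro v (rfl | ⟨-, hv⟩)
    · simpa using hνx
    · simp [show ν v = 0 from hv]
  simpa using nonneg_of_mem_coneOf hneg hy

lemma setDim_pyramid (hs : setDim (coneOf s) = d) (hν0 : ν ≠ 0) (hν : IsSuppForm (coneOf s) ν)
    (hx : ν x ≠ 0) : setDim (pyramid s x ν) = d := by
  have hker : span ℝ (s ∩ {y | ν y = 0}) = ker ν := by
    rw [← span_coneOf, ← coneOf_inter_ker fun v hv => hν.1 v (subset_coneOf s hv)]
    exact hν.span_inter_ker hs hν0
  rw [pyramid, setDim, span_coneOf, span_union, hker, span_singleton_sup_ker_eq_top ν hx,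
    finrank_top, Module.finrank_fin_fun]

lemma inter_ker_subset_ker_of_not_isSuppForm (hμ0 : μ ≠ 0) (hμs : ∀ v ∈ s, 0 ≤ μ v)
    (hs : setDim (coneOf s) = d) (hP : setDim (pyramid s x ν) = d)
    (hμ : IsSuppForm (pyramid s x ν) μ) (hnot : ¬ IsSuppForm (coneOf s) μ) :
    coneOf s ∩ {y | μ y = 0} ⊆ {y | ν y = 0} := by
  set F := coneOf s ∩ {y | μ y = 0}
  have hFdim : setDim F + 2 ≤ d := by
    have hle := setDim_add_one_le_of_subset_ker hμ0 (s := F) fun _ hy => hy.2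
    have hne : setDim F ≠ d - 1 := fun h =>
      hnot ⟨fun _ => nonneg_of_mem_coneOf hμs, by rw [h, hs]⟩
    omega
  have hPF : pyramid s x ν ∩ {y | μ y = 0} ⊆ coneOf ({x} ∪ (F ∩ {y | ν y = 0})) := by
    rw [pyramid, coneOf_inter_ker fun v hv => hμ.1 v (subset_coneOf _ hv)]
    refine coneOf_mono ?_
    rintro v ⟨rfl | ⟨hvs, hvν⟩, hvμ⟩
    · exact Or.inl rfl
    · exact Or.inr ⟨⟨subset_coneOf s hvs, hvμ⟩, hvν⟩
  have hdim := (setDim_mono hPF).trans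
    ((setDim_coneOf _).le.trans (setDim_singleton_union_le _ _))
  rw [hμ.2, hP] at hdim
  exact subset_ker_of_setDim_le Set.inter_subset_left (fun _ hy => hy.2) (by omega)

lemma inter_ker_subset_ker_of_pos (hνs : ∀ v ∈ s, 0 ≤ ν v) (hνx : ν x ≤ 0)
    (hμs : ∀ v ∈ s, 0 ≤ μ v) (hpos : ∀ v ∈ s, v ∉ pyramid s x ν → 0 < μ v) :
    coneOf s ∩ {y | μ y = 0} ⊆ {y | ν y = 0} := by
  rw [coneOf_inter_ker hμs]
  refine (coneOf_subset_span _).trans (span_le_ker ?_)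
  rintro v ⟨hvs, hvμ⟩
  have hvP : v ∈ pyramid s x ν := by
    by_contra h
    exact (hpos v hvs h).ne' hvμ
  exact le_antisymm (nonpos_of_mem_pyramid hνx hvP) (hνs v hvs)

end Pyramid

end

/-- Let `P = cone(key)` with
`key = {x_i} ∪ ({x_1,…,x_{i−1}} ∩ H)` for a support hyperplane
`H ∈ ℋ^<(C_{i−1}, x_i)` (given by `ν` with `ν(x_i) < 0`), and let `G` (given
by `μ`) be a support hyperplane of `P`. Then `G` is a support hyperplane of
`C_i` that is not a support hyperplane of `C_{i−1}` if and only if: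
(i) `x_j ∈ G⁺` for all `j < i`, and (ii) `x_j ∈ G^>` for all `j < i` with
`x_j ∉ P`. -/
theorem new_support_hyperplane_criterion {d n : ℕ}
    (x : Fin n → E d) (i : Fin n)
    (Cprev Ci : Set (E d))
    (hCp : Cprev = coneOf (x '' {j | j < i}))
    (hCi : Ci = coneOf (x '' {j | j ≤ i}))
    (hfullp : setDim Cprev = d) (hfulli : setDim Ci = d)
    (ν : (E d) →ₗ[ℝ] ℝ) (hν0 : ν ≠ 0) (hν : IsSuppForm Cprev ν)
    (hvis : ν (x i) < 0)
    (P : Set (E d))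
    (hP : P = coneOf ({x i} ∪ (x '' {j | j < i} ∩ {y | ν y = 0})))
    (μ : (E d) →ₗ[ℝ] ℝ) (hμ0 : μ ≠ 0) (hμ : IsSuppForm P μ) :
    (IsSuppForm Ci μ ∧ ¬ IsSuppForm Cprev μ) ↔
      ((∀ j, j < i → 0 ≤ μ (x j)) ∧
       (∀ j, j < i → x j ∉ P → 0 < μ (x j))) := by
  subst hCp hCi hP
  set s := x '' {j | j < i}
  change IsSuppForm (pyramid s (x i) ν) μ at hμ
  have hgens : x '' {j | j ≤ i} = {x i} ∪ s := by
    rw [← Set.insert_eq, ← Set.image_insert_eq]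
    exact congrArg (x '' ·) (Set.Iio_insert (a := i)).symm
  have hPd := setDim_pyramid hfullp hν0 hν hvis.ne
  have hxj : ∀ j < i, x j ∈ s := fun j hj => ⟨j, hj, rfl⟩
  constructor
  · rintro ⟨hμCi, hnot⟩
    have hμs : ∀ j < i, 0 ≤ μ (x j) := fun j hj =>
      hμCi.1 _ (subset_coneOf _ (hgens ▸ Or.inr (hxj j hj)))
    have hF := inter_ker_subset_ker_of_not_isSuppForm hμ0 (Set.forall_mem_image.2 hμs)
      hfullp hPd hμ hnot
    refine ⟨hμs, fun j hj hjP => (hμs j hj).lt_of_ne' fun h0 => hjP ?_⟩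
    exact mem_pyramid_of_mem_ker (hxj j hj) (hF ⟨subset_coneOf _ (hxj j hj), h0⟩)
  · rintro ⟨hμs, hpos⟩
    have hμCi : ∀ y ∈ coneOf (x '' {j | j ≤ i}), 0 ≤ μ y := by
      refine fun y => nonneg_of_mem_coneOf ?_
      rw [hgens]
      rintro v (rfl | ⟨j, hj, rfl⟩)
      exacts [hμ.1 _ mem_pyramid_apex, hμs j hj]
    refine ⟨hμ.of_subset hμ0 hPd hfulli ?_ hμCi, not_isSuppForm_of_inter_ker_subset hfullp hν0
      hν.1 hvis (hμ.1 _ mem_pyramid_apex) ?_⟩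
    · exact hgens ▸ coneOf_mono (Set.union_subset_union_right _ Set.inter_subset_left)
    · exact inter_ker_subset_ker_of_pos (fun v hv => hν.1 v (subset_coneOf s hv)) hvis.le
        (Set.forall_mem_image.2 hμs) (Set.forall_mem_image.2 hpos)
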